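/- The signed sum over A(n) equals the product of the two determinants on Dodgson's left side, and the signed sum over B(n) ∪ C(n) (with the −1 convention on C(n)) equals the right side; hence the existence of the weight-preserving injection T whose complement in B(n) ∪ C(n) has total weight zero implies Dodgson's identity (Alice). -/

import Mathlib

/- We work with `n + 2` people of each sex (so the number of people is at least 2),
men and women both indexed by `Fin (n+2)`; man `0` is "Mr. 1" and man `Fin.last (n+1)`
is "Mr. n", and similarly for women.

A pair `(π, σ)` of total permutations of `Fin (n+2)` encodes an element of one of the
sets `A(n)`, `B(n)`, `C(n)` of pairs (marriage matching, affair matching) of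
Zeilberger's proof, via dummy values at the unused points:
* `A(n)`: `π` is the marriage matching of all men to all women, and the affair
  matching `{2,…,n-1} → {2',…,(n-1)'}` is encoded by a permutation `σ` fixing the
  endpoints `0` and `last`.
* `B(n)`: the marriage matching `{1,…,n-1} → {1',…,(n-1)'}` is encoded by `π` with the
  dummy value `π last = last`, and the affair matching `{2,…,n} → {2',…,n'}` by `σ`
  with dummy value `σ 0 = 0`.
* `C(n)`: the marriage matching `{1,…,n-1} → {2',…,n'}` is encoded by `π` with dummy
  value `π last = 0`, and the affair matching `{2,…,n} → {1',…,(n-1)'}` by `σ` with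
  dummy value `σ 0 = last`. -/

/-- A pair (marriages, affairs) of permutations. -/
abbrev PairPerm (n : ℕ) := Equiv.Perm (Fin (n + 2)) × Equiv.Perm (Fin (n + 2))

/-- The last index (Mr./Ms. `n`). -/
def lastF (n : ℕ) : Fin (n + 2) := Fin.last (n + 1)

/-- The middle indices `{2,…,n-1}` (people having affairs in `A(n)`). -/
def middleF (n : ℕ) : Finset (Fin (n + 2)) := (Finset.univ.erase 0).erase (lastF n)

/-- Membership in `A(n)`: the affair permutation fixes the two endpoints. -/
def InA {n : ℕ} (p : PairPerm n) : Prop := p.2 0 = 0 ∧ p.2 (lastF n) = lastF n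

/-- Membership in `B(n)`: dummy marriage `n ↦ n'`, dummy affair `1 ↦ 1'`. -/
def InB {n : ℕ} (p : PairPerm n) : Prop := p.1 (lastF n) = lastF n ∧ p.2 0 = 0

/-- Membership in `C(n)`: dummy marriage `n ↦ 1'`, dummy affair `1 ↦ n'`. -/
def InC {n : ℕ} (p : PairPerm n) : Prop := p.1 (lastF n) = 0 ∧ p.2 0 = lastF n

/-- Embedding `Fin n → Fin (n+2)` onto the middle indices `1,…,n`. -/
def midE (n : ℕ) (i : Fin n) : Fin (n + 2) := i.succ.castSucc

/-- Embedding `Fin (n+1) → Fin (n+2)` onto the low indices. -/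
def loE (n : ℕ) (i : Fin (n + 1)) : Fin (n + 2) := i.castSucc

/-- Embedding `Fin (n+1) → Fin (n+2)` onto the high indices. -/
def hiE (n : ℕ) (i : Fin (n + 1)) : Fin (n + 2) := i.succ

/-- The weight of an element of `A(n)`. -/
def wA {n : ℕ} (R : Type) [CommRing R] (A : Matrix (Fin (n + 2)) (Fin (n + 2)) R)
    (p : PairPerm n) : R :=
  ((Equiv.Perm.sign p.1 : ℤ) : R) * ((Equiv.Perm.sign p.2 : ℤ) : R) *
    (∏ i, A i (p.1 i)) * ∏ i ∈ middleF n, A i (p.2 i)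

/-- The weight of an element of `B(n) ∪ C(n)`, with the extra factor `-1` on `C(n)`
(elements of `C(n)` are recognized by the dummy marriage `π (last) = 0`). -/
def wBC {n : ℕ} (R : Type) [CommRing R] (A : Matrix (Fin (n + 2)) (Fin (n + 2)) R)
    (q : PairPerm n) : R :=
  (if q.1 (lastF n) = 0 then (-1 : R) else 1) *
    (((Equiv.Perm.sign q.1 : ℤ) : R) * ((Equiv.Perm.sign q.2 : ℤ) : R) *
      (∏ i ∈ Finset.univ.erase (lastF n), A i (q.1 i)) *
        ∏ i ∈ Finset.univ.erase 0, A i (q.2 i))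


/-! Both weighted sums split as a sum over marriages times a sum over affairs, and each factor
is a sum of Leibniz terms with some values of the permutation prescribed. Prescribing `σ a = b`
gives the cofactor `adj(A) b a`; prescribing two values gives a cofactor of `A` with one row
replaced by a unit vector. Hence the sum over `A(n)` is `det A · det A[2..n-1]` and the sum
over `B(n) ∪ C(n)` is `adj(A) n n · adj(A) 1 1 - adj(A) 1 n · adj(A) n 1`, whose two equal
sign factors cancel. The injection then moves the first sum onto the part of the second lying
in its range, and the rest contributes zero. -/

open Matrix Equiv Finset

section Leibniz

variable {ι R : Type*} [DecidableEq ι] [CommRing R]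

theorem Matrix.prod_updateRow_single (M : Matrix ι ι R) (σ : ι → ι) {s : Finset ι} {a : ι}
    (ha : a ∈ s) (b : ι) :
    ∏ i ∈ s, M.updateRow a (Pi.single b 1) i (σ i) =
      if σ a = b then ∏ i ∈ s.erase a, M i (σ i) else 0 := by
  rw [← mul_prod_erase s _ ha, updateRow_self,
    prod_congr rfl fun i hi => by rw [updateRow_ne (ne_of_mem_erase hi)]]
  by_cases h : σ a = b <;> simp [h]

variable [Fintype ι]

theorem Matrix.det_eq_sum_sign_mul_prod_row (M : Matrix ι ι R) :
    M.det = ∑ σ : Perm ι, ((Perm.sign σ : ℤ) : R) * ∏ i, M i (σ i) := by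
  rw [← det_transpose, det_apply']
  rfl

def Matrix.cofactorTerm (M : Matrix ι ι R) (a b : ι) (σ : Perm ι) : R :=
  if σ a = b then (Perm.sign σ : ℤ) * ∏ i ∈ univ.erase a, M i (σ i) else 0

theorem Matrix.sum_cofactorTerm (M : Matrix ι ι R) (a b : ι) :
    ∑ σ, M.cofactorTerm a b σ = M.adjugate b a := by
  rw [adjugate_apply, det_eq_sum_sign_mul_prod_row]
  refine sum_congr rfl fun σ _ => ?_
  rw [prod_updateRow_single M σ (mem_univ a), cofactorTerm, mul_ite, mul_zero]

theorem Matrix.sum_sign_mul_prod_erase_erase_eq_adjugate_updateRow (M : Matrix ι ι R) {a c : ι}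
    (hac : a ≠ c) (b d : ι) :
    ∑ σ : Perm ι, (if σ a = b ∧ σ c = d then
        (Perm.sign σ : ℤ) * ∏ i ∈ (univ.erase a).erase c, M i (σ i) else (0 : R)) =
      (M.updateRow c (Pi.single d 1)).adjugate b a := by
  rw [← sum_cofactorTerm]
  refine sum_congr rfl fun σ _ => ?_
  rw [cofactorTerm, prod_updateRow_single _ σ (mem_erase.2 ⟨hac.symm, mem_univ c⟩)]
  by_cases ha : σ a = b <;> by_cases hc : σ c = d <;> simp [ha, hc]

end Leibniz

theorem Fintype.sum_eq_sum_of_injective_of_sum_compl_range_eq_zero {α β M : Type*} [Fintype α]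
    [Fintype β] [AddCommMonoid M] (T : α → β) [DecidablePred (· ∈ Set.range T)]
    (hT : Function.Injective T) (f : α → M) (g : β → M) (hfg : ∀ a, g (T a) = f a)
    (hcompl : ∑ b, (if b ∈ Set.range T then 0 else g b) = 0) :
    ∑ a, f a = ∑ b, g b :=
  calc ∑ a, f a = ∑ b, if b ∈ Set.range T then g b else 0 :=
        Fintype.sum_of_injective T hT _ _ (fun b hb => if_neg hb)
          (fun a => by rw [if_pos ⟨a, rfl⟩, hfg])
    _ = ∑ b, ((if b ∈ Set.range T then g b else 0) + if b ∈ Set.range T then 0 else g b) := by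
        rw [sum_add_distrib, hcompl, add_zero]
    _ = ∑ b, g b := Finset.sum_congr rfl fun b _ => by split_ifs <;> simp

section Dodgson

open scoped Classical

variable {R : Type} [CommRing R] {n : ℕ}

theorem lastF_ne_zero (n : ℕ) : lastF n ≠ 0 := by
  simp [lastF, Fin.ext_iff]

theorem adjugate_updateRow_lastF_zero_zero (A : Matrix (Fin (n + 2)) (Fin (n + 2)) R) :
    (A.updateRow (lastF n) (Pi.single (lastF n) 1)).adjugate 0 0 =
      (A.submatrix (midE n) (midE n)).det := by
  have hrow : (A.updateRow (lastF n) (Pi.single (lastF n) 1)).submatrix Fin.succ Fin.succ =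
      (A.submatrix Fin.succ Fin.succ).updateRow (Fin.last n) (Pi.single (Fin.last n) 1) := by
    ext i j
    rcases eq_or_ne i (Fin.last n) with rfl | hi
    · simp [lastF, Pi.single_apply]
    · simp [updateRow_ne, hi, lastF, ← Fin.succ_last]
  rw [adjugate_fin_succ_eq_det_submatrix, Fin.succAbove_zero, hrow, ← adjugate_apply,
    adjugate_fin_succ_eq_det_submatrix, Fin.succAbove_last, submatrix_submatrix,
    show Fin.succ ∘ Fin.castSucc = midE n from funext Fin.succ_castSucc]
  simp [(Even.add_self n).neg_one_pow]

theorem adjugate_corners_eq_dodgson_rhs (A : Matrix (Fin (n + 2)) (Fin (n + 2)) R) :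
    A.adjugate (lastF n) (lastF n) * A.adjugate 0 0 -
        A.adjugate 0 (lastF n) * A.adjugate (lastF n) 0 =
      (A.submatrix (loE n) (loE n)).det * (A.submatrix (hiE n) (hiE n)).det -
        (A.submatrix (loE n) (hiE n)).det * (A.submatrix (hiE n) (loE n)).det := by
  rw [show loE n = Fin.castSucc from rfl, show hiE n = Fin.succ from rfl]
  simp only [adjugate_fin_succ_eq_det_submatrix, lastF, Fin.succAbove_last, Fin.succAbove_zero,
    Fin.val_last, Fin.val_zero, add_zero, zero_add]
  have hsign : ((-1 : R) ^ (n + 1)) * (-1) ^ (n + 1) = 1 := by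
    rw [← pow_add, (Even.add_self _).neg_one_pow]
  rw [(Even.add_self _).neg_one_pow]
  linear_combination
    -(A.submatrix Fin.castSucc Fin.succ).det * (A.submatrix Fin.succ Fin.castSucc).det * hsign

theorem sum_wA_eq_det_mul_det_midE (A : Matrix (Fin (n + 2)) (Fin (n + 2)) R) :
    ∑ p ∈ univ.filter (fun p : PairPerm n => InA p), wA R A p =
      A.det * (A.submatrix (midE n) (midE n)).det := by
  have hterm : ∀ π σ : Perm (Fin (n + 2)), (if InA (π, σ) then wA R A (π, σ) else 0) =
      ((Perm.sign π : ℤ) * ∏ i, A i (π i)) *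
        if σ 0 = 0 ∧ σ (lastF n) = lastF n then
          (Perm.sign σ : ℤ) * ∏ i ∈ middleF n, A i (σ i) else 0 := by
    intro π σ
    simp only [InA, wA]
    split_ifs <;> ring
  rw [sum_filter, Fintype.sum_prod_type]
  simp_rw [hterm, ← mul_sum, ← sum_mul, ← det_eq_sum_sign_mul_prod_row, middleF,
    sum_sign_mul_prod_erase_erase_eq_adjugate_updateRow A (lastF_ne_zero n).symm,
    adjugate_updateRow_lastF_zero_zero]

theorem sum_wBC_eq_dodgson_rhs (A : Matrix (Fin (n + 2)) (Fin (n + 2)) R) :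
    ∑ q ∈ univ.filter (fun q : PairPerm n => InB q ∨ InC q), wBC R A q =
      (A.submatrix (loE n) (loE n)).det * (A.submatrix (hiE n) (hiE n)).det -
        (A.submatrix (loE n) (hiE n)).det * (A.submatrix (hiE n) (loE n)).det := by
  have hterm : ∀ π σ : Perm (Fin (n + 2)),
      (if InB (π, σ) ∨ InC (π, σ) then wBC R A (π, σ) else 0) =
      A.cofactorTerm (lastF n) (lastF n) π * A.cofactorTerm 0 0 σ -
        A.cofactorTerm (lastF n) 0 π * A.cofactorTerm 0 (lastF n) σ := by
    intro π σ
    simp only [InB, InC, wBC, cofactorTerm]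
    split_ifs <;> grind [lastF_ne_zero]
  rw [sum_filter, Fintype.sum_prod_type]
  simp_rw [hterm, sum_sub_distrib, ← Fintype.sum_mul_sum, sum_cofactorTerm]
  exact adjugate_corners_eq_dodgson_rhs A

end Dodgson

open scoped Classical in
/-- The signed sum over `A(n)` is the left side of Dodgson's identity, the signed sum
over `B(n) ∪ C(n)` (with the `-1` convention on `C(n)`) is the right side, and hence
the existence of a weight-preserving injection `T : A(n) → B(n) ∪ C(n)` whose
complement has total weight zero implies Dodgson's identity (Alice). -/
theorem dodgson_from_bijection {n : ℕ} (R : Type) [CommRing R]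
    (A : Matrix (Fin (n + 2)) (Fin (n + 2)) R) :
    (∑ p ∈ Finset.univ.filter (fun p : PairPerm n => InA p), wA R A p =
        A.det * (A.submatrix (midE n) (midE n)).det) ∧
    (∑ q ∈ Finset.univ.filter (fun q : PairPerm n => InB q ∨ InC q), wBC R A q =
        (A.submatrix (loE n) (loE n)).det * (A.submatrix (hiE n) (hiE n)).det -
          (A.submatrix (loE n) (hiE n)).det * (A.submatrix (hiE n) (loE n)).det) ∧
    (∀ T : {p : PairPerm n // InA p} → {q : PairPerm n // InB q ∨ InC q},
      Function.Injective T →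
      (∀ a, wBC R A (T a).1 = wA R A a.1) →
      (∑ b : {q : PairPerm n // InB q ∨ InC q},
          (if b ∈ Set.range T then 0 else wBC R A b.1)) = 0 →
      A.det * (A.submatrix (midE n) (midE n)).det =
        (A.submatrix (loE n) (loE n)).det * (A.submatrix (hiE n) (hiE n)).det -
          (A.submatrix (loE n) (hiE n)).det * (A.submatrix (hiE n) (loE n)).det) := by
  refine ⟨sum_wA_eq_det_mul_det_midE A, sum_wBC_eq_dodgson_rhs A, fun T hT hw hcompl => ?_⟩
  rw [← sum_wA_eq_det_mul_det_midE, ← sum_wBC_eq_dodgson_rhs, sum_subtype _ mem_filter_univ,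
    sum_subtype _ mem_filter_univ]
  exact Fintype.sum_eq_sum_of_injective_of_sum_compl_range_eq_zero T hT _ _ hw hcompl
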